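/- arXiv:math/0609296 — 3 statements merged into one kernel-verified Lean document; each statement's English description precedes it below -/
import Mathlib

section
/- Every representable operator A ⊆ Z is monotone. More precisely, if h : Z → ℝ ∪ {+∞} is convex, h(z) ≥ p(z) for all z ∈ Z, and A = {z ∈ Z : h(z) = p(z)}, then ⟨x₁−x₂, x₁*−x₂*⟩ ≥ 0 for all (x₁,x₁*), (x₂,x₂*) ∈ A. -/
open Pointwise Filter Topology

noncomputable section

variable {E F : Type*} [NormedAddCommGroup E] [NormedSpace ℝ E]
  [NormedAddCommGroup F] [NormedSpace ℝ F]

/-- Duality pairing `p(x, x*) = x*(x)` on `E × E*`. -/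
def pairing (z : E × (E →L[ℝ] ℝ)) : ℝ := z.2 z.1

/-- Natural dual product `(x,x*)·(y,y*) = x*(y) + y*(x)`. -/
def dprod (z w : E × (E →L[ℝ] ℝ)) : ℝ := z.2 w.1 + w.2 z.1

/-- A (graph of a) multivalued operator is monotone. -/
def MonotoneSet (A : Set (E × (E →L[ℝ] ℝ))) : Prop :=
  ∀ a ∈ A, ∀ b ∈ A, 0 ≤ (a.2 - b.2) (a.1 - b.1)

/-- Maximal monotone: monotone and maximal with respect to inclusion among monotone sets. -/
def MaximalMonotoneSet (A : Set (E × (E →L[ℝ] ℝ))) : Prop :=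
  MonotoneSet A ∧ ∀ B, MonotoneSet B → A ⊆ B → A = B

/-- Fitzpatrick function `h_A(z) = sup_{a ∈ A} (z·a − p(a))`. -/
def fitz (A : Set (E × (E →L[ℝ] ℝ))) (z : E × (E →L[ℝ] ℝ)) : EReal :=
  ⨆ a ∈ A, ((dprod z a - pairing a : ℝ) : EReal)

/-- Conjugate with respect to the natural dual product. -/
def econj (g : E × (E →L[ℝ] ℝ) → EReal) (w : E × (E →L[ℝ] ℝ)) : EReal :=
  ⨆ z, ((dprod w z : ℝ) : EReal) - g z

/-- Penot function `φ_A = (h_A)*`. -/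
def penot (A : Set (E × (E →L[ℝ] ℝ))) : E × (E →L[ℝ] ℝ) → EReal := econj (fitz A)

/-- Domain of a multivalued operator. -/
def opDom (A : Set (E × (E →L[ℝ] ℝ))) : Set E := {x | ∃ u, (x, u) ∈ A}

/-- Sum of multivalued operators: `A + B = {(x, u+v) : (x,u) ∈ A, (x,v) ∈ B}`. -/
def opSum (A B : Set (E × (E →L[ℝ] ℝ))) : Set (E × (E →L[ℝ] ℝ)) :=
  {z | ∃ u v, (z.1, u) ∈ A ∧ (z.1, v) ∈ B ∧ z.2 = u + v}

/-- Convexity for extended-real-valued functions. -/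
def EConvex (h : E × (E →L[ℝ] ℝ) → EReal) : Prop :=
  ∀ z w : E × (E →L[ℝ] ℝ), ∀ a b : ℝ, 0 ≤ a → 0 ≤ b → a + b = 1 →
    h (a • z + b • w) ≤ (a : EReal) * h z + (b : EReal) * h w

/-- The adjoint `L* y* = y* ∘ L`. -/
def adjoint (L : E →L[ℝ] F) (g : F →L[ℝ] ℝ) : E →L[ℝ] ℝ := g.comp L

/-- The composition `L* M L = {(x, L* y*) : (Lx, y*) ∈ M}`. -/
def opComp (L : E →L[ℝ] F) (M : Set (F × (F →L[ℝ] ℝ))) : Set (E × (E →L[ℝ] ℝ)) :=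
  {z | ∃ g, (L z.1, g) ∈ M ∧ z.2 = adjoint L g}

/-- Normal cone operator of a set `C`. -/
def normalCone (C : Set E) : Set (E × (E →L[ℝ] ℝ)) :=
  {z | z.1 ∈ C ∧ ∀ v ∈ C, z.2 (v - z.1) ≤ 0}

/-- `0 ∈ ⁱS`: the union `⋃_{n ≥ 1} n • S` is a linear subspace. -/
def ZeroInRAI {G : Type*} [AddCommGroup G] [Module ℝ G] (S : Set G) : Prop :=
  ∃ W : Submodule ℝ G, (W : Set G) = ⋃ (n : ℕ) (_ : 1 ≤ n), (n : ℝ) • S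

/-- `0 ∈ ^{ic}S`: the union `⋃_{n ≥ 1} n • S` is a closed linear subspace. -/
def ZeroInIC {G : Type*} [AddCommGroup G] [Module ℝ G] [TopologicalSpace G] (S : Set G) : Prop :=
  ∃ W : Submodule ℝ G, ((W : Set G) = ⋃ (n : ℕ) (_ : 1 ≤ n), (n : ℝ) • S) ∧ IsClosed (W : Set G)

end

/-- Every representable operator is monotone.  More precisely, if `h : Z → ℝ ∪ {+∞}`
is convex, `h ≥ p` everywhere, and `A = {z | h z = p z}`, then `A` is monotone. -/
theorem monotoneSet_of_representative {X : Type*} [NormedAddCommGroup X] [NormedSpace ℝ X]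
    (h : X × (X →L[ℝ] ℝ) → EReal) (hconv : EConvex h)
    (hge : ∀ z, (pairing z : EReal) ≤ h z)
    (A : Set (X × (X →L[ℝ] ℝ))) (hA : A = {z | h z = (pairing z : EReal)}) :
    MonotoneSet A := by
  subst hA
  intro a ha b hb
  have hma := hge ((1/2 : ℝ) • a + (1/2 : ℝ) • b)
  have hc := hconv a b (1/2) (1/2) (by norm_num) (by norm_num) (by norm_num)
  rw [Set.mem_setOf_eq] at ha hb
  rw [ha, hb] at hc
  have key : (pairing ((1/2 : ℝ) • a + (1/2 : ℝ) • b) : EReal)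
      ≤ ((1/2 * pairing a + 1/2 * pairing b : ℝ) : EReal) := by
    refine le_trans (le_trans hma hc) ?_
    rw [EReal.coe_add, EReal.coe_mul, EReal.coe_mul]
  rw [EReal.coe_le_coe_iff] at key
  have hp : pairing ((1/2 : ℝ) • a + (1/2 : ℝ) • b)
      = 1/4 * (a.2 a.1 + a.2 b.1 + b.2 a.1 + b.2 b.1) := by
    simp [pairing, Prod.smul_fst, Prod.smul_snd]
    ring
  have hpa : pairing a = a.2 a.1 := rfl
  have hpb : pairing b = b.2 b.1 := rfl
  rw [hp, hpa, hpb] at key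
  have : (a.2 - b.2) (a.1 - b.1) = a.2 a.1 - a.2 b.1 - b.2 a.1 + b.2 b.1 := by
    simp [ContinuousLinearMap.sub_apply, map_sub]
    ring
  rw [this]
  linarith
end

section
/- A nonempty operator A ⊆ Z is maximal monotone if and only if its Fitzpatrick function h_A is a representative of A, that is, if and only if h_A(z) ≥ p(z) for every z ∈ Z and A = {z ∈ Z : h_A(z) = p(z)}. -/
open Pointwise Filter Topology

/-- A nonempty `A ⊆ Z` is maximal monotone iff its Fitzpatrick function `h_A` is a
representative of `A`, i.e., iff `h_A ≥ p` everywhere and `A = {h_A = p}`. -/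
theorem maximalMonotone_iff_fitz_representative {X : Type*} [NormedAddCommGroup X]
    [NormedSpace ℝ X] (A : Set (X × (X →L[ℝ] ℝ))) (hne : A.Nonempty) :
    MaximalMonotoneSet A ↔
      ((∀ z : X × (X →L[ℝ] ℝ), (pairing z : EReal) ≤ fitz A z) ∧
        A = {z | fitz A z = (pairing z : EReal)}) := by
  classical
  have key : ∀ z a : X × (X →L[ℝ] ℝ),
      ((z.2 - a.2) (z.1 - a.1)) = pairing z + pairing a - dprod z a := by
    intro z a
    simp only [pairing, dprod, ContinuousLinearMap.sub_apply, map_sub]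
    ring
  have sym : ∀ z a : X × (X →L[ℝ] ℝ),
      (a.2 - z.2) (a.1 - z.1) = (z.2 - a.2) (z.1 - a.1) := by
    intro z a
    simp only [ContinuousLinearMap.sub_apply, map_sub]
    ring
  have mem_le : ∀ z ∈ A, (pairing z : EReal) ≤ fitz A z := by
    intro z hz
    have h1 : ((dprod z z - pairing z : ℝ) : EReal) ≤ fitz A z :=
      le_iSup₂ (f := fun a (_ : a ∈ A) => ((dprod z a - pairing a : ℝ) : EReal)) z hz
    have e : dprod z z - pairing z = pairing z := by simp [dprod, pairing]
    rwa [e] at h1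
  have fitz_le : ∀ z, (∀ a ∈ A, 0 ≤ (z.2 - a.2) (z.1 - a.1)) →
      fitz A z ≤ (pairing z : EReal) := by
    intro z hz
    refine iSup₂_le fun a ha => ?_
    have h := hz a ha
    rw [key] at h
    exact_mod_cast (by linarith : dprod z a - pairing a ≤ pairing z)
  have from_le : ∀ z, fitz A z ≤ (pairing z : EReal) →
      ∀ a ∈ A, 0 ≤ (z.2 - a.2) (z.1 - a.1) := by
    intro z hz a ha
    have h1 : ((dprod z a - pairing a : ℝ) : EReal) ≤ (pairing z : EReal) :=
      le_trans (le_iSup₂ (f := fun a (_ : a ∈ A) =>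
        ((dprod z a - pairing a : ℝ) : EReal)) a ha) hz
    rw [EReal.coe_le_coe_iff] at h1
    rw [key]; linarith
  have ins_mono : ∀ z, MonotoneSet A → (∀ a ∈ A, 0 ≤ (z.2 - a.2) (z.1 - a.1)) →
      MonotoneSet (insert z A) := by
    intro z hmono hz a ha b hb
    rcases ha with rfl | ha <;> rcases hb with rfl | hb
    · simp
    · exact hz b hb
    · rw [sym]; exact hz a ha
    · exact hmono a ha b hb
  constructor
  · rintro ⟨hmono, hmax⟩
    have hgeq : ∀ z, (pairing z : EReal) ≤ fitz A z := by
      intro z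
      by_contra h
      push_neg at h
      have hB : MonotoneSet (insert z A) :=
        ins_mono z hmono (from_le z h.le)
      have hAeq := hmax _ hB (Set.subset_insert z A)
      have hzA : z ∈ A := hAeq ▸ Set.mem_insert z A
      exact absurd (mem_le z hzA) (not_le.mpr h)
    refine ⟨hgeq, ?_⟩
    ext z
    simp only [Set.mem_setOf_eq]
    constructor
    · intro hz
      have hle : fitz A z ≤ (pairing z : EReal) :=
        fitz_le z fun a ha => hmono z hz a ha
      exact le_antisymm hle (hgeq z)
    · intro hz
      have hB : MonotoneSet (insert z A) :=
        ins_mono z hmono (from_le z hz.le)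
      have hAeq := hmax _ hB (Set.subset_insert z A)
      exact hAeq ▸ Set.mem_insert z A
  · rintro ⟨hgeq, heq⟩
    have hmono : MonotoneSet A := by
      intro a ha b hb
      have h2 : fitz A a = (pairing a : EReal) := by
        have := heq ▸ ha
        simpa using this
      exact from_le a h2.le b hb
    refine ⟨hmono, fun B hBmono hAB => Set.Subset.antisymm hAB fun z hz => ?_⟩
    have hle : fitz A z ≤ (pairing z : EReal) :=
      fitz_le z fun a ha => hBmono z hz a (hAB ha)
    have h3 : fitz A z = (pairing z : EReal) := le_antisymm hle (hgeq z)
    rw [heq]; exact h3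
end

section
/- Let X be a Banach space, L : X → X × X the diagonal map Lx = (x,x), and U, V convex subsets of X. Then 0 ∈ ⁱ(R(L) − U × V) if and only if 0 ∈ ⁱ(U − V), and 0 ∈ ^{ic}(R(L) − U × V) if and only if 0 ∈ ^{ic}(U − V). -/
open Pointwise Filter Topology

lemma diag_smul_mem_iff {X : Type*} [NormedAddCommGroup X] [NormedSpace ℝ X]
    (U V : Set X) {n : ℕ} (hn : 1 ≤ n) (z : X × X) :
    z ∈ (n : ℝ) • ((Set.range fun x : X => (x, x)) - U ×ˢ V) ↔
      z.2 - z.1 ∈ (n : ℝ) • (U - V) := by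
  have hn0 : (n : ℝ) ≠ 0 := by exact_mod_cast Nat.one_le_iff_ne_zero.mp hn
  constructor
  · rintro ⟨s, hs, rfl⟩
    rw [Set.mem_sub] at hs
    obtain ⟨d, ⟨x, rfl⟩, p, hp, rfl⟩ := hs
    refine ⟨p.1 - p.2, Set.sub_mem_sub hp.1 hp.2, ?_⟩
    simp [Prod.smul_def, smul_sub]
  · rintro ⟨w, hw, hwz⟩
    rw [Set.mem_sub] at hw
    obtain ⟨u, hu, v, hv, rfl⟩ := hw
    refine ⟨((n : ℝ)⁻¹ • z.1 + u, (n : ℝ)⁻¹ • z.1 + u) - (u, v), ?_, ?_⟩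
    · exact Set.sub_mem_sub ⟨_, rfl⟩ ⟨hu, hv⟩
    · have hwz' : (n : ℝ) • (u - v) = z.2 - z.1 := hwz
      have h2 : z.2 = z.1 + (n : ℝ) • (u - v) := by
        rw [hwz']; abel
      ext
      · simp [smul_sub, smul_smul, mul_inv_cancel₀ hn0]
      · simp [h2, smul_sub, smul_smul, mul_inv_cancel₀ hn0]
        abel

/-- For the diagonal map `L : X → X × X`, `Lx = (x,x)`, and convex `U, V ⊆ X`:
`0 ∈ ⁱ(R(L) − U × V)` iff `0 ∈ ⁱ(U − V)`, and `0 ∈ ^{ic}(R(L) − U × V)` iff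
`0 ∈ ^{ic}(U − V)`. -/
theorem zeroIn_diagonal_iff {X : Type*} [NormedAddCommGroup X] [NormedSpace ℝ X]
    (U V : Set X) (hU : Convex ℝ U) (hV : Convex ℝ V) :
    (ZeroInRAI ((Set.range fun x : X => (x, x)) - U ×ˢ V) ↔ ZeroInRAI (U - V)) ∧
      (ZeroInIC ((Set.range fun x : X => (x, x)) - U ×ˢ V) ↔ ZeroInIC (U - V)) := by
  classical
  set f : (X × X) →L[ℝ] X :=
    ContinuousLinearMap.snd ℝ X X - ContinuousLinearMap.fst ℝ X X with hf
  set g : X →L[ℝ] (X × X) := (0 : X →L[ℝ] X).prod (ContinuousLinearMap.id ℝ X) with hg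
  have hfg : ∀ t : X, f (g t) = t := by intro t; simp [hf, hg]
  have hfz : ∀ z : X × X, f z = z.2 - z.1 := by intro z; simp [hf]
  have hkey : (⋃ (n : ℕ) (_ : 1 ≤ n),
        (n : ℝ) • ((Set.range fun x : X => (x, x)) - U ×ˢ V)) =
      f ⁻¹' (⋃ (n : ℕ) (_ : 1 ≤ n), (n : ℝ) • (U - V)) := by
    ext z
    simp only [Set.mem_iUnion, Set.mem_preimage, hfz]
    exact exists_congr fun n => exists_congr fun hn => diag_smul_mem_iff U V hn z
  constructor
  · constructor
    · rintro ⟨W, hW⟩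
      refine ⟨W.comap (g : X →ₗ[ℝ] (X × X)), ?_⟩
      ext t
      have : g t ∈ (W : Set (X × X)) ↔ t ∈ ⋃ (n : ℕ) (_ : 1 ≤ n), (n : ℝ) • (U - V) := by
        rw [hW, hkey, Set.mem_preimage, hfg]
      simpa using this
    · rintro ⟨W, hW⟩
      refine ⟨W.comap (f : (X × X) →ₗ[ℝ] X), ?_⟩
      rw [hkey]
      ext z
      simp [hW]
  · constructor
    · rintro ⟨W, hW, hWc⟩
      refine ⟨W.comap (g : X →ₗ[ℝ] (X × X)), ?_, ?_⟩
      · ext t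
        have : g t ∈ (W : Set (X × X)) ↔ t ∈ ⋃ (n : ℕ) (_ : 1 ≤ n), (n : ℝ) • (U - V) := by
          rw [hW, hkey, Set.mem_preimage, hfg]
        simpa using this
      · have : (W.comap (g : X →ₗ[ℝ] (X × X)) : Set X) = g ⁻¹' (W : Set (X × X)) := rfl
        rw [this]
        exact hWc.preimage g.continuous
    · rintro ⟨W, hW, hWc⟩
      refine ⟨W.comap (f : (X × X) →ₗ[ℝ] X), ?_, ?_⟩
      · rw [hkey]
        ext z
        simp [hW]
      · have : (W.comap (f : (X × X) →ₗ[ℝ] X) : Set (X × X)) = f ⁻¹' (W : Set X) := rfl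
        rw [this]
        exact hWc.preimage f.continuous
end
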